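/- Let e, d ∈ V with ϑ_e(d) = 1, and let X = {a ∈ V : ϑ_e(a) = 1}. Then: (a) the translation x ↦ x + d is a bijection from X onto {x ∈ V : ϑ_{e+d}(x) = 0}, sending d to 0; (b) for all distinct a, b ∈ X with a ≠ d and b ≠ d, one has ⟨a,b⟩ + ⟨a,d⟩ + ⟨b,d⟩ = 0 if and only if ⟨a + d, b + d⟩ = 0; (c) ϑ_0(e + d) = ϑ_0(e) + 1, so ϑ_{e+d} has the type opposite to that of ϑ_e. (Consequently, the descendant at the vertex d of the two-graph 𝒳^±_{2m} on X, whose triples are those with ⟨a,b⟩+⟨a,c⟩+⟨b,c⟩ = 0, is isomorphic to the orthogonal polar graph Γ(O^∓(2m,2)) together with one isolated vertex.) -/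
import Mathlib


open Finset

/-- The symplectic bilinear form `⟨u,v⟩ = ∑_{i<m} (u_i v_{m+i} + u_{m+i} v_i)` on `(F_2)^{2m}`. -/
def symp (m : ℕ) (u v : Fin (2*m) → ZMod 2) : ZMod 2 :=
  ∑ i : Fin m, (u ⟨i.1, by omega⟩ * v ⟨m + i.1, by omega⟩ +
    u ⟨m + i.1, by omega⟩ * v ⟨i.1, by omega⟩)

/-- The quadratic form `ϑ_0(u) = ∑_{i<m} u_i u_{m+i}`. -/
def th0 (m : ℕ) (u : Fin (2*m) → ZMod 2) : ZMod 2 :=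
  ∑ i : Fin m, u ⟨i.1, by omega⟩ * u ⟨m + i.1, by omega⟩

/-- The quadratic form `ϑ_a(u) = ϑ_0(u) + ⟨a,u⟩`. -/
def th (m : ℕ) (a u : Fin (2*m) → ZMod 2) : ZMod 2 :=
  th0 m u + symp m a u

lemma symp_comm (m : ℕ) (u v : Fin (2*m) → ZMod 2) : symp m u v = symp m v u := by
  unfold symp; apply Finset.sum_congr rfl; intros; ring

lemma symp_add_left (m : ℕ) (u w v : Fin (2*m) → ZMod 2) :
    symp m (u + w) v = symp m u v + symp m w v := by
  unfold symp
  rw [← Finset.sum_add_distrib]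
  apply Finset.sum_congr rfl; intros; simp [Pi.add_apply]; ring

lemma symp_add_right (m : ℕ) (u v w : Fin (2*m) → ZMod 2) :
    symp m u (v + w) = symp m u v + symp m u w := by
  rw [symp_comm, symp_add_left, symp_comm m v u, symp_comm m w u]

lemma symp_self (m : ℕ) (u : Fin (2*m) → ZMod 2) : symp m u u = 0 := by
  unfold symp
  rw [Finset.sum_eq_zero]
  intro i _
  rw [mul_comm]
  exact CharTwo.add_self_eq_zero _

lemma th0_add (m : ℕ) (u v : Fin (2*m) → ZMod 2) :
    th0 m (u + v) = th0 m u + th0 m v + symp m u v := by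
  unfold th0 symp
  rw [← Finset.sum_add_distrib, ← Finset.sum_add_distrib]
  apply Finset.sum_congr rfl; intros; simp [Pi.add_apply]; ring

lemma th_key (m : ℕ) (e d x : Fin (2*m) → ZMod 2) :
    th m (e + d) (x + d) = th m e x + th m e d := by
  unfold th
  rw [th0_add, symp_add_left, symp_add_right, symp_add_right, symp_self, symp_comm m d x]
  linear_combination CharTwo.add_self_eq_zero (symp m x d)

/-- The descendant of the two-graph `𝒳^±_{2m}` at a vertex `d` is the orthogonal polar
graph `Γ(O^∓(2m,2))` plus an isolated vertex: (a) `x ↦ x + d` maps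
`X = {ϑ_e = 1}` bijectively onto `{ϑ_{e+d} = 0}`, sending `d` to `0`; (b) it transforms
the descendant's adjacency `⟨a,b⟩+⟨a,d⟩+⟨b,d⟩ = 0` into `⟨a+d,b+d⟩ = 0`;
(c) `ϑ_0(e+d) = ϑ_0(e) + 1`, so `ϑ_{e+d}` has the opposite type. -/
theorem stmt_10 (m : ℕ) (hm : 1 ≤ m) (e d : Fin (2*m) → ZMod 2) (hd : th m e d = 1) :
    -- (a)
    (Set.BijOn (fun x => x + d) {a | th m e a = 1} {x | th m (e + d) x = 0}
      ∧ d + d = 0)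
    -- (b)
    ∧ (∀ a b : Fin (2*m) → ZMod 2, th m e a = 1 → th m e b = 1 →
        a ≠ b → a ≠ d → b ≠ d →
        (symp m a b + symp m a d + symp m b d = 0 ↔ symp m (a + d) (b + d) = 0))
    -- (c)
    ∧ th0 m (e + d) = th0 m e + 1 := by
  have hdd : d + d = 0 := by funext i; exact CharTwo.add_self_eq_zero _
  have hcancel : ∀ x : Fin (2*m) → ZMod 2, (x + d) + d = x := by
    intro x; rw [add_assoc, hdd, add_zero]
  refine ⟨⟨⟨?_, ?_, ?_⟩, hdd⟩, ?_, ?_⟩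
  · intro x hx
    simp only [Set.mem_setOf_eq] at hx ⊢
    rw [th_key, hx, hd]
    decide
  · intro x _ y _ h
    simp only at h
    calc x = (x + d) + d := (hcancel x).symm
    _ = (y + d) + d := by rw [h]
    _ = y := hcancel y
  · intro y hy
    simp only [Set.mem_setOf_eq] at hy
    refine ⟨y + d, ?_, hcancel y⟩
    simp only [Set.mem_setOf_eq]
    have h := th_key m e d (y + d)
    rw [hcancel, hy, hd] at h
    have h2 : (1 : ZMod 2) = 1 := rfl
    -- h : 0 = th m e (y + d) + 1
    have h3 : th m e (y + d) = -1 := eq_neg_of_add_eq_zero_left h.symm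
    rw [h3]; decide
  · intro a b _ _ _ _ _
    rw [symp_add_left, symp_add_right, symp_add_right, symp_self, symp_comm m d b]
    constructor <;> intro h <;> linear_combination h
  · unfold th at hd
    rw [th0_add]
    linear_combination hd
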